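/- arXiv:1805.04686 — 8 statements merged into one kernel-verified Lean document; each statement's English description precedes it below -/
import Mathlib

section
/- Let T be a nonempty finite type, p a probability mass function on T, and f : T → ℝ. Define the reweighted distribution p'(τ) = p(τ)·exp(f(τ)) / (Σ_σ p(σ)·exp(f(σ))). Then E_{p'}[f] ≥ E_p[f], i.e., Σ_τ p'(τ)·f(τ) ≥ Σ_τ p(τ)·f(τ). -/
open Real Finset

/-!
Writing `Z = E_p[exp f]`, the claim reads `E_p[f] · E_p[exp f] ≤ E_p[f · exp f]`: the functions
`f` and `exp ∘ f` vary together, so this is the weighted form of Chebyshev's sum inequality,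
i.e. the covariance of `f` and `exp ∘ f` under `p` is nonnegative.
-/

theorem Monovary.sum_mul_sum_le_sum_mul_sum_of_nonneg {ι α : Type*} [Fintype ι] [CommRing α]
    [LinearOrder α] [IsStrictOrderedRing α] {w f g : ι → α} (hw : ∀ i, 0 ≤ w i)
    (hfg : Monovary f g) :
    (∑ i, w i * f i) * ∑ i, w i * g i ≤ (∑ i, w i) * ∑ i, w i * (f i * g i) := by
  have hpairs : 0 ≤ ∑ i, ∑ j, w i * w j * ((f j - f i) * (g j - g i)) :=
    sum_nonneg fun i _ => sum_nonneg fun j _ =>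
      mul_nonneg (mul_nonneg (hw i) (hw j)) (hfg.sub_mul_sub_nonneg i j)
  have hexpand : ∑ i, ∑ j, w i * w j * ((f j - f i) * (g j - g i)) =
      2 * ((∑ i, w i) * ∑ i, w i * (f i * g i) - (∑ i, w i * f i) * ∑ i, w i * g i) := by
    have hterm : ∀ i j, w i * w j * ((f j - f i) * (g j - g i)) =
        w i * (w j * (f j * g j)) + w j * (w i * (f i * g i))
          - (w j * f j) * (w i * g i) - (w i * f i) * (w j * g j) := fun i j => by ring
    simp only [hterm, sum_add_distrib, sum_sub_distrib, ← mul_sum, ← sum_mul]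
    ring
  linarith

theorem reweight_exp_improves_expectation_general
    (T : Type*) [Fintype T]
    (p : T → ℝ) (hp0 : ∀ τ, 0 ≤ p τ) (hp1 : ∑ τ : T, p τ = 1)
    (f : T → ℝ)
    (p' : T → ℝ)
    (hp' : ∀ τ, p' τ = p τ * Real.exp (f τ) / (∑ σ : T, p σ * Real.exp (f σ))) :
    ∑ τ : T, p τ * f τ ≤ ∑ τ : T, p' τ * f τ := by
  obtain ⟨τ₀, -, hτ₀⟩ :=
    exists_lt_of_sum_lt (s := univ) (f := fun _ => 0) (g := p) (by simp [hp1])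
  have hZ : 0 < ∑ σ, p σ * exp (f σ) :=
    sum_pos' (fun σ _ => mul_nonneg (hp0 σ) (exp_pos _).le)
      ⟨τ₀, mem_univ _, mul_pos hτ₀ (exp_pos _)⟩
  have hp'f : ∑ τ, p' τ * f τ = (∑ τ, p τ * (exp (f τ) * f τ)) / ∑ σ, p σ * exp (f σ) := by
    simp only [hp', sum_div]
    exact sum_congr rfl fun τ _ => by ring
  have hmonovary : Monovary (exp ∘ f) f := (monovary_self f).comp_monotone_left exp_monotone
  have hchebyshev := hmonovary.sum_mul_sum_le_sum_mul_sum_of_nonneg hp0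
  rw [hp'f, le_div_iff₀ hZ]
  simpa [hp1, mul_comm] using hchebyshev

/-- Proposition 1: reweighting a pmf `p` by `exp(f)` does not decrease the expectation
of `f`. -/
theorem reweight_exp_improves_expectation
    (T : Type*) [Fintype T] [Nonempty T]
    (p : T → ℝ) (hp0 : ∀ τ, 0 ≤ p τ) (hp1 : ∑ τ : T, p τ = 1)
    (f : T → ℝ)
    (p' : T → ℝ)
    (hp' : ∀ τ, p' τ = p τ * Real.exp (f τ) / (∑ σ : T, p σ * Real.exp (f σ))) :
    ∑ τ : T, p τ * f τ ≤ ∑ τ : T, p' τ * f τ :=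
  reweight_exp_improves_expectation_general T p hp0 hp1 f p' hp'
end

section
/- Let T be a nonempty finite type, p a probability mass function on T, and f : T → ℝ. Define the reweighted distribution p'(τ) = p(τ)·exp(f(τ)) / (Σ_σ p(σ)·exp(f(σ))). Then E_{p'}[f] = E_p[f] if and only if f is constant on the support of p, i.e., if and only if there exists c ∈ ℝ such that f(τ) = c for every τ with p(τ) > 0. -/
open Real Finset

/-! Write `Z = ∑ p e^f` for the normalizer. Then `Z (E_{p'}[f] - E_p[f]) = E_p[f e^f] - E_p[e^f] E_p[f]`
is a weighted covariance of `f` and `e^f`, which by Lagrange's identity is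
`½ ∑_{σ,τ} p_σ p_τ (f_σ - f_τ)(e^{f_σ} - e^{f_τ})`. Since `exp` is strictly increasing, every term is
nonnegative and vanishes exactly when `p_σ p_τ = 0` or `f_σ = f_τ`. -/

section CovarianceIdentity

variable {ι R : Type*} [CommRing R]

theorem Finset.sum_sum_mul_mul_sub_mul_sub (s : Finset ι) (w f g : ι → R) :
    ∑ i ∈ s, ∑ j ∈ s, w i * w j * ((f i - f j) * (g i - g j)) =
      2 * ((∑ i ∈ s, w i) * ∑ i ∈ s, w i * f i * g i -
        (∑ i ∈ s, w i * f i) * ∑ i ∈ s, w i * g i) := by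
  have expand : ∀ i j, w i * w j * ((f i - f j) * (g i - g j)) =
      w i * f i * g i * w j - w i * f i * (w j * g j) - w i * g i * (w j * f j) +
        w i * (w j * f j * g j) := fun i j => by ring
  simp only [expand, sum_add_distrib, sum_sub_distrib, ← mul_sum, ← sum_mul]
  ring

end CovarianceIdentity

theorem exists_forall_imp_eq_iff {ι β : Type*} [Nonempty β] (s : Finset ι) (P : ι → Prop)
    (f : ι → β) :
    (∃ c, ∀ i ∈ s, P i → f i = c) ↔ ∀ i ∈ s, ∀ j ∈ s, P i → P j → f i = f j := by
  refine ⟨fun ⟨c, hc⟩ i hi j hj hPi hPj => (hc i hi hPi).trans (hc j hj hPj).symm, fun h => ?_⟩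
  by_cases hP : ∃ i ∈ s, P i
  · obtain ⟨i, hi, hPi⟩ := hP
    exact ⟨f i, fun j hj hPj => h j hj i hi hPj hPi⟩
  · exact ⟨Classical.arbitrary β, fun i hi hPi => (hP ⟨i, hi, hPi⟩).elim⟩

section StrictMono

variable {R : Type*} [CommRing R] [LinearOrder R] [IsStrictOrderedRing R] {g : R → R}

theorem StrictMono.sub_mul_sub_nonneg (hg : StrictMono g) (a b : R) :
    0 ≤ (a - b) * (g a - g b) := by
  rcases le_total a b with h | h
  · exact mul_nonneg_of_nonpos_of_nonpos (sub_nonpos.2 h) (sub_nonpos.2 (hg.monotone h))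
  · exact mul_nonneg (sub_nonneg.2 h) (sub_nonneg.2 (hg.monotone h))

theorem StrictMono.sub_mul_sub_eq_zero_iff (hg : StrictMono g) {a b : R} :
    (a - b) * (g a - g b) = 0 ↔ a = b := by
  rw [mul_eq_zero, sub_eq_zero, sub_eq_zero, hg.injective.eq_iff, or_self]

theorem StrictMono.sum_mul_sum_eq_sum_mul_sum_iff (hg : StrictMono g) {ι : Type*}
    (s : Finset ι) {w : ι → R} (hw : ∀ i ∈ s, 0 ≤ w i) (f : ι → R) :
    (∑ i ∈ s, w i) * ∑ i ∈ s, w i * f i * g (f i) =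
        (∑ i ∈ s, w i * f i) * ∑ i ∈ s, w i * g (f i) ↔
      ∃ c, ∀ i ∈ s, 0 < w i → f i = c := by
  have term_nonneg : ∀ i ∈ s, ∀ j ∈ s, 0 ≤ w i * w j * ((f i - f j) * (g (f i) - g (f j))) :=
    fun i hi j hj => mul_nonneg (mul_nonneg (hw i hi) (hw j hj)) (hg.sub_mul_sub_nonneg _ _)
  have term_eq_zero : ∀ i ∈ s, ∀ j ∈ s,
      w i * w j * ((f i - f j) * (g (f i) - g (f j))) = 0 ↔ (0 < w i → 0 < w j → f i = f j) := by
    intro i hi j hj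
    rw [mul_eq_zero, mul_eq_zero, hg.sub_mul_sub_eq_zero_iff, (hw i hi).lt_iff_ne',
      (hw j hj).lt_iff_ne']
    tauto
  rw [exists_forall_imp_eq_iff, ← sub_eq_zero, ← mul_eq_zero_iff_left (two_ne_zero' R),
    ← sum_sum_mul_mul_sub_mul_sub s w f fun i => g (f i),
    sum_eq_zero_iff_of_nonneg fun i hi => sum_nonneg (term_nonneg i hi)]
  refine forall₂_congr fun i hi => ?_
  rw [sum_eq_zero_iff_of_nonneg (term_nonneg i hi)]
  exact forall₂_congr fun j hj => term_eq_zero i hi j hj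

end StrictMono

theorem reweight_exp_expectation_eq_iff_const_on_support_general
    (T : Type*) [Fintype T]
    (p : T → ℝ) (hp0 : ∀ τ, 0 ≤ p τ) (hp1 : ∑ τ : T, p τ = 1)
    (f : T → ℝ)
    (p' : T → ℝ)
    (hp' : ∀ τ, p' τ = p τ * Real.exp (f τ) / (∑ σ : T, p σ * Real.exp (f σ))) :
    (∑ τ : T, p' τ * f τ = ∑ τ : T, p τ * f τ) ↔
      ∃ c : ℝ, ∀ τ, 0 < p τ → f τ = c := by
  obtain ⟨τ₀, -, hτ₀⟩ : ∃ τ ∈ univ, (0 : T → ℝ) τ < p τ :=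
    exists_lt_of_sum_lt (by simp [hp1])
  have hZ : 0 < ∑ σ : T, p σ * exp (f σ) :=
    sum_pos' (fun τ _ => mul_nonneg (hp0 τ) (exp_pos _).le)
      ⟨τ₀, mem_univ τ₀, mul_pos hτ₀ (exp_pos _)⟩
  have hp'_expectation : ∑ τ : T, p' τ * f τ =
      (∑ τ : T, p τ * f τ * exp (f τ)) / ∑ σ : T, p σ * exp (f σ) := by
    rw [sum_div]
    exact sum_congr rfl fun τ _ => by rw [hp']; ring
  rw [hp'_expectation, div_eq_iff hZ.ne', ← one_mul (∑ τ : T, p τ * f τ * exp (f τ)), ← hp1,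
    exp_strictMono.sum_mul_sum_eq_sum_mul_sum_iff univ (fun τ _ => hp0 τ)]
  simp only [mem_univ, true_imp_iff]

/-- Strict version of Proposition 1: reweighting `p` by `exp(f)` leaves the expectation
of `f` unchanged iff `f` is constant on the support of `p`. -/
theorem reweight_exp_expectation_eq_iff_const_on_support
    (T : Type*) [Fintype T] [Nonempty T]
    (p : T → ℝ) (hp0 : ∀ τ, 0 ≤ p τ) (hp1 : ∑ τ : T, p τ = 1)
    (f : T → ℝ)
    (p' : T → ℝ)
    (hp' : ∀ τ, p' τ = p τ * Real.exp (f τ) / (∑ σ : T, p σ * Real.exp (f σ))) :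
    (∑ τ : T, p' τ * f τ = ∑ τ : T, p τ * f τ) ↔
      ∃ c : ℝ, ∀ τ, 0 < p τ → f τ = c :=
  reweight_exp_expectation_eq_iff_const_on_support_general T p hp0 hp1 f p' hp'
end

section
/- Let T be a nonempty finite type, p_0 a probability mass function on T, and f : T → ℝ. Define the trajectory distribution iteration p_{k+1}(τ) = p_k(τ)·exp(f(τ)) / (Σ_σ p_k(σ)·exp(f(σ))). Then for every k ≥ 0 and every τ, the iterate has the closed form p_k(τ) = p_0(τ)·exp(k·f(τ)) / (Σ_σ p_0(σ)·exp(k·f(σ))). -/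
/-!
Let `reweight w p` be the normalisation of `τ ↦ p τ * w τ`. Reweighting ignores the
normalisation of its input, so reweighting twice is reweighting once by the product of the
weights. Hence the `k`-th iterate is `p₀` reweighted by
`exp f ^ k = exp (k • f)`; the denominators never vanish because `p₀` has mass one and the
weights are positive.
-/

open Real Finset

section Reweight

variable {T K : Type*} [Fintype T] [Field K]

def reweight (w p : T → K) : T → K :=
  fun τ => p τ * w τ / ∑ σ, p σ * w σ

theorem reweight_one {p : T → K} (hp : ∑ σ, p σ = 1) : reweight 1 p = p := by
  ext τ
  simp [reweight, hp]

theorem reweight_reweight {v w p : T → K} (hw : ∑ σ, p σ * w σ ≠ 0) :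
    reweight v (reweight w p) = reweight (w * v) p := by
  ext τ
  have hden : ∑ σ, reweight w p σ * v σ = (∑ σ, p σ * (w * v) σ) / ∑ σ, p σ * w σ := by
    rw [sum_div]
    refine sum_congr rfl fun σ _ => ?_
    simp only [reweight, Pi.mul_apply]
    ring
  rw [reweight, hden, reweight, reweight, Pi.mul_apply, ← mul_assoc,
    div_mul_eq_mul_div, div_div_div_cancel_right₀ hw]

end Reweight

theorem sum_mul_pos_of_sum_pos {T : Type*} [Fintype T] {p w : T → ℝ} (hp : ∀ τ, 0 ≤ p τ)
    (hsum : 0 < ∑ τ, p τ) (hw : ∀ τ, 0 < w τ) : 0 < ∑ τ, p τ * w τ := by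
  obtain ⟨τ, -, hτ⟩ := exists_lt_of_sum_lt (f := 0) (g := p) (by simpa using hsum)
  exact sum_pos' (fun σ _ => mul_nonneg (hp σ) (hw σ).le)
    ⟨τ, mem_univ τ, mul_pos hτ (hw τ)⟩

theorem trajectory_distribution_iteration_closed_form_general
    (T : Type*) [Fintype T]
    (p0 : T → ℝ) (hp0 : ∀ τ, 0 ≤ p0 τ) (hp1 : ∑ τ : T, p0 τ = 1)
    (f : T → ℝ)
    (p : ℕ → T → ℝ)
    (hinit : ∀ τ, p 0 τ = p0 τ)
    (hstep : ∀ k τ, p (k + 1) τ =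
      p k τ * Real.exp (f τ) / (∑ σ : T, p k σ * Real.exp (f σ))) :
    ∀ k τ, p k τ =
      p0 τ * Real.exp ((k : ℝ) * f τ) /
        (∑ σ : T, p0 σ * Real.exp ((k : ℝ) * f σ)) := by
  have hden_pos (k : ℕ) : 0 < ∑ σ, p0 σ * exp ((k : ℝ) * f σ) :=
    sum_mul_pos_of_sum_pos hp0 (hp1 ▸ one_pos) fun _ => exp_pos _
  suffices h : ∀ k : ℕ, p k = reweight (fun τ => exp ((k : ℝ) * f τ)) p0 from
    fun k => congrFun (h k)
  intro k
  induction k with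
  | zero =>
    simp only [CharP.cast_eq_zero, zero_mul, exp_zero]
    exact (funext hinit).trans (reweight_one hp1).symm
  | succ k ih =>
    rw [show p (k + 1) = reweight (exp ∘ f) (p k) from funext (hstep k), ih,
      reweight_reweight (hden_pos k).ne']
    congr 1
    ext τ
    simp [add_mul, exp_add]

/-- Closed form of the trajectory distribution iteration
`p_{k+1}(τ) ∝ p_k(τ)·exp(f(τ))`: the `k`-th iterate is
`p_k(τ) = p_0(τ)·exp(k·f(τ)) / Σ_σ p_0(σ)·exp(k·f(σ))`. -/
theorem trajectory_distribution_iteration_closed_form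
    (T : Type*) [Fintype T] [Nonempty T]
    (p0 : T → ℝ) (hp0 : ∀ τ, 0 ≤ p0 τ) (hp1 : ∑ τ : T, p0 τ = 1)
    (f : T → ℝ)
    (p : ℕ → T → ℝ)
    (hinit : ∀ τ, p 0 τ = p0 τ)
    (hstep : ∀ k τ, p (k + 1) τ =
      p k τ * Real.exp (f τ) / (∑ σ : T, p k σ * Real.exp (f σ))) :
    ∀ k τ, p k τ =
      p0 τ * Real.exp ((k : ℝ) * f τ) /
        (∑ σ : T, p0 σ * Real.exp ((k : ℝ) * f σ)) :=
  trajectory_distribution_iteration_closed_form_general T p0 hp0 hp1 f p hinit hstep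
end

section
/- Let T be a nonempty finite type, p_0 a probability mass function on T, and f : T → ℝ. Define p_k(τ) = p_0(τ)·exp(k·f(τ)) / (Σ_σ p_0(σ)·exp(k·f(σ))) for k ∈ ℕ. Then the sequence k ↦ E_{p_k}[f] = Σ_τ p_k(τ)·f(τ) is monotonically nondecreasing in k. -/
/-!
Writing `w_k τ = p₀(τ) exp(k f(τ))`, the expectation `E_{p_k}[f]` is the `w_k`-weighted mean of
`f`, and `w_{k+1} = w_k · exp ∘ f`. Since `exp ∘ f` increases together with `f`, the weighted
Chebyshev sum inequality shows that tilting the weights by it can only raise the mean of `f`.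
-/

open Real Finset

section Chebyshev

variable {ι R : Type*} [CommRing R] [LinearOrder R] [IsStrictOrderedRing R]

theorem Monovary.sum_mul_sum_le_sum_mul_sum_mul {s : Finset ι} {w g h : ι → R}
    (hw : ∀ i ∈ s, 0 ≤ w i) (hgh : Monovary g h) :
    (∑ i ∈ s, w i * g i) * (∑ i ∈ s, w i * h i) ≤
      (∑ i ∈ s, w i) * ∑ i ∈ s, w i * g i * h i := by
  set a : ι → ι → R := fun i j => w i * w j * (g j * h j - g i * h j)
  have hdiff : (∑ i ∈ s, w i) * (∑ i ∈ s, w i * g i * h i) -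
      (∑ i ∈ s, w i * g i) * (∑ i ∈ s, w i * h i) = ∑ i ∈ s, ∑ j ∈ s, a i j := by
    simp only [sum_mul_sum, ← sum_sub_distrib]
    exact sum_congr rfl fun i _ => sum_congr rfl fun j _ => by ring
  -- Symmetrising `a` in `i, j` exposes the nonnegative products `(g j - g i) * (h j - h i)`.
  have hsymm : 2 * ∑ i ∈ s, ∑ j ∈ s, a i j =
      ∑ i ∈ s, ∑ j ∈ s, w i * w j * ((g j - g i) * (h j - h i)) := by
    rw [two_mul]
    nth_rewrite 2 [sum_comm]
    simp only [← sum_add_distrib]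
    exact sum_congr rfl fun i _ => sum_congr rfl fun j _ => by ring
  have hnonneg : 0 ≤ ∑ i ∈ s, ∑ j ∈ s, w i * w j * ((g j - g i) * (h j - h i)) :=
    sum_nonneg fun i hi => sum_nonneg fun j hj =>
      mul_nonneg (mul_nonneg (hw i hi) (hw j hj)) (hgh.sub_mul_sub_nonneg i j)
  linarith

end Chebyshev

section WeightedMean

variable {ι R : Type*} [Fintype ι] [Field R] [LinearOrder R] [IsStrictOrderedRing R]

def weightedMean (w g : ι → R) : R := (∑ i, w i * g i) / ∑ i, w i

theorem weightedMean_le_weightedMean_mul {w g h : ι → R} (hw : ∀ i, 0 ≤ w i)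
    (hh : ∀ i, 0 < h i) (hhg : Monovary h g) :
    weightedMean w g ≤ weightedMean (fun i => w i * h i) g := by
  by_cases hzero : ∑ i, w i = 0
  · have hw0 : ∀ i, w i = 0 := by
      simpa using (sum_eq_zero_iff_of_nonneg fun i _ => hw i).1 hzero
    simp [weightedMean, hw0]
  obtain ⟨i₀, -, hi₀⟩ := exists_ne_zero_of_sum_ne_zero hzero
  have hpos : 0 < ∑ i, w i := lt_of_le_of_ne (sum_nonneg fun i _ => hw i) (Ne.symm hzero)
  have hpos' : 0 < ∑ i, w i * h i :=
    sum_pos' (fun i _ => mul_nonneg (hw i) (hh i).le)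
      ⟨i₀, mem_univ _, mul_pos (lt_of_le_of_ne (hw i₀) (Ne.symm hi₀)) (hh i₀)⟩
  rw [weightedMean, weightedMean, div_le_div_iff₀ hpos hpos']
  calc (∑ i, w i * g i) * ∑ i, w i * h i
      ≤ (∑ i, w i) * ∑ i, w i * g i * h i :=
        hhg.symm.sum_mul_sum_le_sum_mul_sum_mul fun i _ => hw i
    _ = (∑ i, w i * h i * g i) * ∑ i, w i := by
        rw [mul_comm]
        exact congrArg (· * _) (sum_congr rfl fun i _ => by ring)

end WeightedMean

theorem trajectory_iteration_expectation_monotone_general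
    (T : Type*) [Fintype T]
    (p0 : T → ℝ) (hp0 : ∀ τ, 0 ≤ p0 τ)
    (f : T → ℝ)
    (p : ℕ → T → ℝ)
    (hp : ∀ k τ, p k τ =
      p0 τ * Real.exp ((k : ℝ) * f τ) /
        (∑ σ : T, p0 σ * Real.exp ((k : ℝ) * f σ))) :
    Monotone (fun k : ℕ => ∑ τ : T, p k τ * f τ) := by
  have hmean : ∀ k : ℕ, ∑ τ, p k τ * f τ =
      weightedMean (fun τ => p0 τ * exp (k * f τ)) f := fun k => by
    simp only [hp, weightedMean, sum_div, div_mul_eq_mul_div]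
  have htilt : ∀ k : ℕ, (fun τ => p0 τ * exp ((k + 1 : ℕ) * f τ)) =
      fun τ => p0 τ * exp (k * f τ) * exp (f τ) := fun k => by
    ext τ
    rw [Nat.cast_succ, add_one_mul, exp_add, mul_assoc]
  refine monotone_nat_of_le_succ fun k => ?_
  simp only [hmean, htilt]
  exact weightedMean_le_weightedMean_mul (fun τ => mul_nonneg (hp0 τ) (exp_nonneg _))
    (fun τ => exp_pos _) ((monovary_self f).comp_monotone_left exp_monotone)

/-- The expected value of `f` under the iterates
`p_k(τ) = p_0(τ)·exp(k·f(τ)) / Σ_σ p_0(σ)·exp(k·f(σ))` is monotonically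
nondecreasing in `k`. -/
theorem trajectory_iteration_expectation_monotone
    (T : Type*) [Fintype T] [Nonempty T]
    (p0 : T → ℝ) (hp0 : ∀ τ, 0 ≤ p0 τ) (hp1 : ∑ τ : T, p0 τ = 1)
    (f : T → ℝ)
    (p : ℕ → T → ℝ)
    (hp : ∀ k τ, p k τ =
      p0 τ * Real.exp ((k : ℝ) * f τ) /
        (∑ σ : T, p0 σ * Real.exp ((k : ℝ) * f σ))) :
    Monotone (fun k : ℕ => ∑ τ : T, p k τ * f τ) :=
  trajectory_iteration_expectation_monotone_general T p0 hp0 f p hp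
end

section
/- Let T be a nonempty finite type, p_0 a probability mass function on T, and f : T → ℝ. Define p_k(τ) = p_0(τ)·exp(k·f(τ)) / (Σ_σ p_0(σ)·exp(k·f(σ))) for k ∈ ℕ. Let m = max{f(τ) : p_0(τ) > 0} and A = {τ : p_0(τ) > 0 and f(τ) = m}. Then for every τ ∈ T, the limit lim_{k→∞} p_k(τ) exists and equals p_0(τ)/(Σ_{σ∈A} p_0(σ)) if τ ∈ A, and 0 otherwise. -/
open Real Finset Filter Topology

/-!
Dividing numerator and denominator of `p_k(τ)` by `exp (k m)` turns every weight into
`p_0(σ) exp (k (f σ - m))`. On the support of `p_0` we have `f σ ≤ m`, so this weight tends to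
`p_0(σ)` when `f σ = m` and to `0` otherwise; the denominator therefore tends to the positive
mass `Σ_{σ ∈ A} p_0(σ)`, and the limit of the quotient is the quotient of the limits.
-/

lemma tendsto_exp_nat_mul_of_neg {c : ℝ} (hc : c < 0) :
    Tendsto (fun k : ℕ => exp (k * c)) atTop (𝓝 0) :=
  tendsto_exp_atBot.comp (tendsto_natCast_atTop_atTop.atTop_mul_const_of_neg hc)

lemma tendsto_mul_exp_nat_mul_sub {w x m : ℝ} (hw : 0 ≤ w) (hx : 0 < w → x ≤ m) :
    Tendsto (fun k : ℕ => w * exp (k * (x - m))) atTop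
      (𝓝 (if 0 < w ∧ x = m then w else 0)) := by
  rcases hw.eq_or_lt with rfl | hpos
  · simp
  rcases (hx hpos).eq_or_lt with rfl | hlt
  · simp [hpos]
  simpa [hlt.ne] using (tendsto_exp_nat_mul_of_neg (sub_neg.mpr hlt)).const_mul w

lemma mul_exp_div_sum_mul_exp_sub {ι : Type*} (s : Finset ι) (a x c : ℝ) (b y : ι → ℝ) :
    a * exp x / ∑ i ∈ s, b i * exp (y i) = a * exp (x - c) / ∑ i ∈ s, b i * exp (y i - c) := by
  simp only [exp_sub, mul_div_assoc', ← Finset.sum_div]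
  exact (div_div_div_cancel_right₀ (exp_pos c).ne' _ _).symm

theorem trajectory_iteration_converges_general
    (T : Type*) [Fintype T]
    (p0 : T → ℝ) (hp0 : ∀ τ, 0 ≤ p0 τ)
    (f : T → ℝ)
    (p : ℕ → T → ℝ)
    (hp : ∀ k τ, p k τ =
      p0 τ * Real.exp ((k : ℝ) * f τ) /
        (∑ σ : T, p0 σ * Real.exp ((k : ℝ) * f σ)))
    (m : ℝ) (hm : IsGreatest (f '' {τ | 0 < p0 τ}) m) :
    ∀ τ : T, Filter.Tendsto (fun k : ℕ => p k τ) Filter.atTop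
      (nhds (if 0 < p0 τ ∧ f τ = m then
        p0 τ / (∑ σ ∈ Finset.univ.filter (fun σ => 0 < p0 σ ∧ f σ = m), p0 σ)
      else 0)) := by
  intro τ
  have hweight σ := tendsto_mul_exp_nat_mul_sub (hp0 σ) fun h => hm.2 ⟨σ, h, rfl⟩
  have hmass : 0 < ∑ σ ∈ univ.filter (fun σ => 0 < p0 σ ∧ f σ = m), p0 σ := by
    obtain ⟨σ, hσ, hfσ⟩ := hm.1
    exact sum_pos (fun i hi => (mem_filter.mp hi).2.1) ⟨σ, mem_filter.mpr ⟨mem_univ σ, hσ, hfσ⟩⟩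
  have hden : Tendsto (fun k : ℕ => ∑ σ, p0 σ * exp (k * (f σ - m))) atTop
      (𝓝 (∑ σ ∈ univ.filter (fun σ => 0 < p0 σ ∧ f σ = m), p0 σ)) := by
    rw [sum_filter]
    exact tendsto_finsetSum _ fun σ _ => hweight σ
  have hshift k : p k τ = p0 τ * exp (k * (f τ - m)) / ∑ σ, p0 σ * exp (k * (f σ - m)) := by
    simp only [hp, mul_sub]
    exact mul_exp_div_sum_mul_exp_sub _ _ _ _ _ _
  simp only [hshift]
  have hlim := (hweight τ).div hden hmass.ne'
  rwa [ite_div, zero_div] at hlim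

/-- Convergence of the trajectory distribution iteration: the iterates
`p_k(τ) = p_0(τ)·exp(k·f(τ)) / Σ_σ p_0(σ)·exp(k·f(σ))` converge, as `k → ∞`,
to the distribution concentrated on the maximizers of `f` within the support
of `p_0`, with mass proportional to `p_0`. -/
theorem trajectory_iteration_converges
    (T : Type*) [Fintype T] [Nonempty T]
    (p0 : T → ℝ) (hp0 : ∀ τ, 0 ≤ p0 τ) (hp1 : ∑ τ : T, p0 τ = 1)
    (f : T → ℝ)
    (p : ℕ → T → ℝ)
    (hp : ∀ k τ, p k τ =
      p0 τ * Real.exp ((k : ℝ) * f τ) /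
        (∑ σ : T, p0 σ * Real.exp ((k : ℝ) * f σ)))
    (m : ℝ) (hm : IsGreatest (f '' {τ | 0 < p0 τ}) m) :
    ∀ τ : T, Filter.Tendsto (fun k : ℕ => p k τ) Filter.atTop
      (nhds (if 0 < p0 τ ∧ f τ = m then
        p0 τ / (∑ σ ∈ Finset.univ.filter (fun σ => 0 < p0 σ ∧ f σ = m), p0 σ)
      else 0)) :=
  trajectory_iteration_converges_general T p0 hp0 f p hp m hm
end

section
/- Let T be a nonempty finite type and let p, q be probability mass functions on T with p(τ) > 0 and q(τ) > 0 for all τ. Define the generator loss L_G(q) = Σ_τ q(τ)·(log(1 − D*(τ)) − log D*(τ)) with D*(τ) = p(τ)/(p(τ) + q(τ)). Then L_G(q) ≥ 0, with equality if and only if q = p. Hence the generator loss at the optimal discriminator is minimized exactly when the generator distribution q equals the data distribution p. -/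
/-!
At the optimal discriminator the generator loss is the Kullback–Leibler divergence
`KL(q ‖ p) = ∑ q log (q / p)`, since `(1 - D*) / D* = q / p`. Because `p` and `q` have the same
total mass, this divergence equals `∑ p · klFun (q / p)` with `klFun x = x log x + 1 - x`, a sum
of nonnegative terms that vanishes exactly when `q / p = 1` everywhere.
-/

open Real Finset InformationTheory

lemma log_one_sub_div_add_sub_log_div_add {p q : ℝ} (hp : 0 < p) (hq : 0 < q) :
    log (1 - p / (p + q)) - log (p / (p + q)) = log (q / p) := by
  have hpq : p + q ≠ 0 := (add_pos hp hq).ne'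
  have h_one_sub : 1 - p / (p + q) = q / (p + q) := by field_simp; ring
  rw [h_one_sub, log_div hq.ne' hpq, log_div hp.ne' hpq, log_div hq.ne' hp.ne']
  ring

lemma mul_klFun_div {p q : ℝ} (hp : p ≠ 0) :
    p * klFun (q / p) = q * log (q / p) + p - q := by
  rw [klFun_apply]
  field_simp

section Gibbs

variable {T : Type*} [Fintype T] {p q : T → ℝ}

lemma sum_mul_log_div_eq_sum_mul_klFun (hp : ∀ τ, p τ ≠ 0) (hpq : ∑ τ, p τ = ∑ τ, q τ) :
    ∑ τ, q τ * log (q τ / p τ) = ∑ τ, p τ * klFun (q τ / p τ) := by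
  simp only [mul_klFun_div (hp _), add_sub_assoc, sum_add_distrib, sum_sub_distrib, hpq,
    sub_self, add_zero]

lemma sum_mul_log_div_nonneg (hp : ∀ τ, 0 < p τ) (hq : ∀ τ, 0 ≤ q τ)
    (hpq : ∑ τ, p τ = ∑ τ, q τ) :
    0 ≤ ∑ τ, q τ * log (q τ / p τ) := by
  rw [sum_mul_log_div_eq_sum_mul_klFun (fun τ ↦ (hp τ).ne') hpq]
  exact sum_nonneg fun τ _ ↦ mul_nonneg (hp τ).le (klFun_nonneg (div_nonneg (hq τ) (hp τ).le))

lemma sum_mul_log_div_eq_zero_iff (hp : ∀ τ, 0 < p τ) (hq : ∀ τ, 0 ≤ q τ)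
    (hpq : ∑ τ, p τ = ∑ τ, q τ) :
    ∑ τ, q τ * log (q τ / p τ) = 0 ↔ q = p := by
  have h_term_nonneg τ : 0 ≤ p τ * klFun (q τ / p τ) :=
    mul_nonneg (hp τ).le (klFun_nonneg (div_nonneg (hq τ) (hp τ).le))
  have h_term_eq_zero τ : p τ * klFun (q τ / p τ) = 0 ↔ q τ = p τ := by
    rw [mul_eq_zero, or_iff_right (hp τ).ne', klFun_eq_zero_iff (div_nonneg (hq τ) (hp τ).le),
      div_eq_one_iff_eq (hp τ).ne']
  rw [sum_mul_log_div_eq_sum_mul_klFun (fun τ ↦ (hp τ).ne') hpq,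
    sum_eq_zero_iff_of_nonneg fun τ _ ↦ h_term_nonneg τ, funext_iff]
  simp only [mem_univ, true_implies, h_term_eq_zero]

end Gibbs

theorem generator_loss_nonneg_eq_zero_iff_general
    (T : Type*) [Fintype T]
    (p q : T → ℝ)
    (hp0 : ∀ τ, 0 < p τ) (hp1 : ∑ τ : T, p τ = 1)
    (hq0 : ∀ τ, 0 < q τ) (hq1 : ∑ τ : T, q τ = 1)
    (Dstar : T → ℝ) (hD : ∀ τ, Dstar τ = p τ / (p τ + q τ)) :
    0 ≤ ∑ τ : T, q τ * (Real.log (1 - Dstar τ) - Real.log (Dstar τ)) ∧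
    (∑ τ : T, q τ * (Real.log (1 - Dstar τ) - Real.log (Dstar τ)) = 0 ↔ q = p) := by
  have h_loss_eq_kl : ∑ τ, q τ * (log (1 - Dstar τ) - log (Dstar τ))
      = ∑ τ, q τ * log (q τ / p τ) := by
    simp only [hD, log_one_sub_div_add_sub_log_div_add (hp0 _) (hq0 _)]
  have hpq : ∑ τ, p τ = ∑ τ, q τ := hp1.trans hq1.symm
  have hq τ : 0 ≤ q τ := (hq0 τ).le
  rw [h_loss_eq_kl]
  exact ⟨sum_mul_log_div_nonneg hp0 hq hpq, sum_mul_log_div_eq_zero_iff hp0 hq hpq⟩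

/-- The generator loss at the optimal discriminator is nonnegative and vanishes iff
the generator distribution `q` equals the data distribution `p`. -/
theorem generator_loss_nonneg_eq_zero_iff
    (T : Type*) [Fintype T] [Nonempty T]
    (p q : T → ℝ)
    (hp0 : ∀ τ, 0 < p τ) (hp1 : ∑ τ : T, p τ = 1)
    (hq0 : ∀ τ, 0 < q τ) (hq1 : ∑ τ : T, q τ = 1)
    (Dstar : T → ℝ) (hD : ∀ τ, Dstar τ = p τ / (p τ + q τ)) :
    0 ≤ ∑ τ : T, q τ * (Real.log (1 - Dstar τ) - Real.log (Dstar τ)) ∧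
    (∑ τ : T, q τ * (Real.log (1 - Dstar τ) - Real.log (Dstar τ)) = 0 ↔ q = p) :=
  generator_loss_nonneg_eq_zero_iff_general T p q hp0 hp1 hq0 hq1 Dstar hD
end

section
/- Let T be a nonempty finite type and let p_data and q be probability mass functions on T with p_data(τ) > 0 and q(τ) > 0 for all τ. For any pmf p on T with p(τ) > 0 for all τ, define the discriminator loss L_D(p) = −Σ_τ [ p_data(τ)·log(p(τ)/(p(τ)+q(τ))) + q(τ)·log(q(τ)/(p(τ)+q(τ))) ]. Then L_D(p) ≥ L_D(p_data) for every such pmf p; i.e., among discriminators of the form D(τ) = p(τ)/(p(τ)+q(τ)) parameterized by a density p, the binary cross-entropy discriminator loss is minimized at p = p_data. -/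
/-!
Pointwise in `τ`, with `a = p_data(τ)` and `b = q(τ)`, the map `D ↦ a log D + b log (1 - D)` on
`(0, 1)` is maximized at `D = a / (a + b)`: this is Gibbs' inequality for the two-point
distributions `(D, 1 - D)` and `(a, b) / (a + b)`, and follows from `log x ≤ x - 1`. Since every
structured discriminator `p / (p + q)` lies in `(0, 1)` and `p_data / (p_data + q)` is the optimal
one, the loss is minimized term by term at `p = p_data`.
-/

open Real Finset

lemma mul_log_sub_mul_log_div_le {a s u : ℝ} (ha : 0 < a) (hs : 0 < s) (hu : 0 < u) :
    a * log u - a * log (a / s) ≤ u * s - a := by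
  have key := log_le_sub_one_of_pos (x := u * s / a) (by positivity)
  rw [log_div (by positivity) ha.ne', log_mul hu.ne' hs.ne'] at key
  rw [log_div ha.ne' hs.ne', ← mul_sub]
  calc a * (log u - (log a - log s)) ≤ a * (u * s / a - 1) :=
        mul_le_mul_of_nonneg_left (by linarith) ha.le
    _ = u * s - a := by field_simp

lemma mul_log_add_mul_log_le {a b u v : ℝ} (ha : 0 < a) (hb : 0 < b) (hu : 0 < u) (hv : 0 < v)
    (huv : u + v = 1) :
    a * log u + b * log v ≤ a * log (a / (a + b)) + b * log (b / (a + b)) := by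
  have hab : 0 < a + b := by linarith
  have hu' := mul_log_sub_mul_log_div_le ha hab hu
  have hv' := mul_log_sub_mul_log_div_le hb hab hv
  have hsum : u * (a + b) - a + (v * (a + b) - b) = 0 := by linear_combination (a + b) * huv
  linarith

lemma mul_log_discriminator_le {a b c : ℝ} (ha : 0 < a) (hb : 0 < b) (hc : 0 < c) :
    a * log (c / (c + b)) + b * log (b / (c + b))
      ≤ a * log (a / (a + b)) + b * log (b / (a + b)) := by
  have hcb : 0 < c + b := by linarith
  refine mul_log_add_mul_log_le ha hb (by positivity) (by positivity) ?_
  field_simp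

theorem structured_discriminator_loss_minimized_at_data_general
    (T : Type*) [Fintype T]
    (pdata q : T → ℝ)
    (hpdata0 : ∀ τ, 0 < pdata τ)
    (hq0 : ∀ τ, 0 < q τ)
    (p : T → ℝ) (hp0 : ∀ τ, 0 < p τ) :
    -(∑ τ : T, (pdata τ * Real.log (pdata τ / (pdata τ + q τ))
        + q τ * Real.log (q τ / (pdata τ + q τ))))
      ≤ -(∑ τ : T, (pdata τ * Real.log (p τ / (p τ + q τ))
        + q τ * Real.log (q τ / (p τ + q τ)))) :=
  neg_le_neg <| sum_le_sum fun τ _ => mul_log_discriminator_le (hpdata0 τ) (hq0 τ) (hp0 τ)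

/-- Theorem 2 (finite-distribution content): among structured discriminators
`D(τ) = p(τ)/(p(τ)+q(τ))` parameterized by a positive pmf `p`, the binary
cross-entropy discriminator loss is minimized at `p = p_data`. -/
theorem structured_discriminator_loss_minimized_at_data
    (T : Type*) [Fintype T] [Nonempty T]
    (pdata q : T → ℝ)
    (hpdata0 : ∀ τ, 0 < pdata τ) (hpdata1 : ∑ τ : T, pdata τ = 1)
    (hq0 : ∀ τ, 0 < q τ) (hq1 : ∑ τ : T, q τ = 1)
    (p : T → ℝ) (hp0 : ∀ τ, 0 < p τ) (hp1 : ∑ τ : T, p τ = 1) :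
    -(∑ τ : T, (pdata τ * Real.log (pdata τ / (pdata τ + q τ))
        + q τ * Real.log (q τ / (pdata τ + q τ))))
      ≤ -(∑ τ : T, (pdata τ * Real.log (p τ / (p τ + q τ))
        + q τ * Real.log (q τ / (p τ + q τ)))) :=
  structured_discriminator_loss_minimized_at_data_general T pdata q hpdata0 hq0 p hp0
end

section
/- Let T be a nonempty finite type and let p be a probability mass function on T with p(τ) > 0 for all τ. For a pmf q on T with q(τ) > 0 for all τ, define V(q) = Σ_τ [ p(τ)·log(p(τ)/(p(τ)+q(τ))) + q(τ)·log(q(τ)/(p(τ)+q(τ))) ]. Then V(q) ≥ −log 4, with equality if and only if q = p. -/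
/-!
Writing `m = (p + q) / 2`, each summand of `V(q)` splits as
`p log (p / m) + q log (q / m) - (p + q) log 2`, so `V(q) + log 4` is the sum of the two
Kullback–Leibler divergences `KL(p ‖ m) + KL(q ‖ m)`. Gibbs' inequality makes both
nonnegative, and `KL(p ‖ m)` vanishes only when `p = m`, i.e. when `q = p`.
-/

open Real Finset InformationTheory

section Gibbs

variable {T : Type*} [Fintype T] {a b : T → ℝ}

/-- Since `∑ a = ∑ b`, the linear correction `b - a` in `b · klFun (a / b)` sums to zero. -/
lemma sum_mul_log_div_eq_sum_mul_klFun_s16 (hb : ∀ τ, b τ ≠ 0) (hsum : ∑ τ, a τ = ∑ τ, b τ) :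
    ∑ τ, a τ * log (a τ / b τ) = ∑ τ, b τ * klFun (a τ / b τ) := by
  have hterm : ∀ τ, b τ * klFun (a τ / b τ) = a τ * log (a τ / b τ) + (b τ - a τ) := by
    intro τ
    rw [klFun_apply]
    field_simp [hb τ]
    ring
  simp only [hterm, sum_add_distrib, sum_sub_distrib, hsum, sub_self, add_zero]

lemma sum_mul_log_div_nonneg_s16 (ha : ∀ τ, 0 ≤ a τ) (hb : ∀ τ, 0 < b τ)
    (hsum : ∑ τ, a τ = ∑ τ, b τ) : 0 ≤ ∑ τ, a τ * log (a τ / b τ) := by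
  rw [sum_mul_log_div_eq_sum_mul_klFun_s16 (fun τ => (hb τ).ne') hsum]
  exact sum_nonneg fun τ _ =>
    mul_nonneg (hb τ).le (klFun_nonneg (div_nonneg (ha τ) (hb τ).le))

lemma sum_mul_log_div_eq_zero_iff_s16 (ha : ∀ τ, 0 ≤ a τ) (hb : ∀ τ, 0 < b τ)
    (hsum : ∑ τ, a τ = ∑ τ, b τ) : ∑ τ, a τ * log (a τ / b τ) = 0 ↔ a = b := by
  have hklFun : ∀ τ, b τ * klFun (a τ / b τ) = 0 ↔ a τ = b τ := fun τ => by
    rw [mul_eq_zero_iff_left (hb τ).ne', klFun_eq_zero_iff (div_nonneg (ha τ) (hb τ).le),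
      div_eq_one_iff_eq (hb τ).ne']
  rw [sum_mul_log_div_eq_sum_mul_klFun_s16 (fun τ => (hb τ).ne') hsum,
    sum_eq_zero_iff_of_nonneg fun τ _ =>
      mul_nonneg (hb τ).le (klFun_nonneg (div_nonneg (ha τ) (hb τ).le)),
    funext_iff]
  simp only [mem_univ, true_implies, hklFun]

end Gibbs

lemma mul_log_div_add_mul_log_div_eq {x y : ℝ} (hx : 0 < x) (hy : 0 < y) :
    x * log (x / (x + y)) + y * log (y / (x + y))
      = x * log (x / ((x + y) / 2)) + y * log (y / ((x + y) / 2)) - (x + y) * log 2 := by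
  have hxy : x + y ≠ 0 := by positivity
  rw [log_div hx.ne' hxy, log_div hy.ne' hxy, log_div hx.ne' (by positivity),
    log_div hy.ne' (by positivity), log_div hxy two_ne_zero]
  ring

lemma sum_mul_log_div_add_eq_sum_kl_sub_log_four {T : Type*} [Fintype T] {p q m : T → ℝ}
    (hp0 : ∀ τ, 0 < p τ) (hp1 : ∑ τ, p τ = 1) (hq0 : ∀ τ, 0 < q τ) (hq1 : ∑ τ, q τ = 1)
    (hm : m = fun τ => (p τ + q τ) / 2) :
    ∑ τ, (p τ * log (p τ / (p τ + q τ)) + q τ * log (q τ / (p τ + q τ)))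
      = ∑ τ, p τ * log (p τ / m τ) + ∑ τ, q τ * log (q τ / m τ) - log 4 := by
  subst hm
  have hlog4 : ∑ τ, (p τ + q τ) * log 2 = log 4 := by
    rw [← sum_mul, sum_add_distrib, hp1, hq1, show (4 : ℝ) = 2 ^ 2 by norm_num, log_pow]
    push_cast
    ring
  simp only [mul_log_div_add_mul_log_div_eq (hp0 _) (hq0 _), sum_sub_distrib, sum_add_distrib,
    hlog4]

theorem gan_value_ge_neg_log_four_general
    (T : Type*) [Fintype T]
    (p : T → ℝ) (hp0 : ∀ τ, 0 < p τ) (hp1 : ∑ τ : T, p τ = 1)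
    (q : T → ℝ) (hq0 : ∀ τ, 0 < q τ) (hq1 : ∑ τ : T, q τ = 1) :
    -Real.log 4
        ≤ ∑ τ : T, (p τ * Real.log (p τ / (p τ + q τ))
            + q τ * Real.log (q τ / (p τ + q τ))) ∧
    (∑ τ : T, (p τ * Real.log (p τ / (p τ + q τ))
            + q τ * Real.log (q τ / (p τ + q τ))) = -Real.log 4 ↔ q = p) := by
  set m : T → ℝ := fun τ => (p τ + q τ) / 2 with hm
  rw [sum_mul_log_div_add_eq_sum_kl_sub_log_four hp0 hp1 hq0 hq1 hm]
  have hm0 : ∀ τ, 0 < m τ := fun τ => by have := hp0 τ; have := hq0 τ; positivity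
  have hm1 : ∑ τ, m τ = 1 := by
    rw [← sum_div, sum_add_distrib, hp1, hq1]
    norm_num
  have hpm := sum_mul_log_div_nonneg_s16 (fun τ => (hp0 τ).le) hm0 (hp1.trans hm1.symm)
  have hqm := sum_mul_log_div_nonneg_s16 (fun τ => (hq0 τ).le) hm0 (hq1.trans hm1.symm)
  have hpm_eq := sum_mul_log_div_eq_zero_iff_s16 (fun τ => (hp0 τ).le) hm0 (hp1.trans hm1.symm)
  have hqm_eq := sum_mul_log_div_eq_zero_iff_s16 (fun τ => (hq0 τ).le) hm0 (hq1.trans hm1.symm)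
  have hp_eq_m : p = m ↔ q = p := by
    simp only [funext_iff, m]
    exact forall_congr' fun τ => by constructor <;> intro h <;> linarith
  have hq_eq_m : q = m ↔ q = p := by
    simp only [funext_iff, m]
    exact forall_congr' fun τ => by constructor <;> intro h <;> linarith
  refine ⟨by linarith, ?_⟩
  rw [sub_eq_neg_self, add_eq_zero_iff_of_nonneg hpm hqm, hpm_eq, hqm_eq, hp_eq_m, hq_eq_m,
    and_self]

/-- Finite-distribution GAN lemma: the GAN value at the optimal discriminator,
`V(q) = Σ_τ [p(τ)·log(p/(p+q)) + q(τ)·log(q/(p+q))]`, satisfies `V(q) ≥ −log 4`,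
with equality iff the generator distribution `q` equals the data distribution `p`. -/
theorem gan_value_ge_neg_log_four
    (T : Type*) [Fintype T] [Nonempty T]
    (p : T → ℝ) (hp0 : ∀ τ, 0 < p τ) (hp1 : ∑ τ : T, p τ = 1)
    (q : T → ℝ) (hq0 : ∀ τ, 0 < q τ) (hq1 : ∑ τ : T, q τ = 1) :
    -Real.log 4
        ≤ ∑ τ : T, (p τ * Real.log (p τ / (p τ + q τ))
            + q τ * Real.log (q τ / (p τ + q τ))) ∧
    (∑ τ : T, (p τ * Real.log (p τ / (p τ + q τ))
            + q τ * Real.log (q τ / (p τ + q τ))) = -Real.log 4 ↔ q = p) :=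
  gan_value_ge_neg_log_four_general T p hp0 hp1 q hq0 hq1
end
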